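/- arXiv:1011.0558 — 5 statements merged into one kernel-verified Lean document; each statement's English description precedes it below -/
import Mathlib

section
/- The reduced standard presentation of a category C is locally confluent: its critical branchings are exactly the pairs (μ_{u,v} w̄, ū μ_{v,w}) for triples (u,v,w) of composable non-identity morphisms of C, and each such branching is confluent; hence, being also terminating, the presentation is convergent and presents C. -/
/-!
A word is brought to normal form by pushing its letters, from right to left, onto a normal word,
contracting the new leftmost pair whenever it is a redex. The confluence of the critical branchings
`(μ_{u,v} w̄, ū μ_{v,w})` is the associativity `(uv)w = u(vw)`; here it says that pushing morphisms
onto normal words (identities acting trivially) is an action of `C`. Therefore the normal form is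
invariant under rewriting: the presentation is confluent, and two words are congruent iff they have
the same normal form. A normal word of non-identity generators evaluating to `f` is `f̄`, or empty
when `f` is an identity, so congruence of such words is equality of their values.
-/

open CategoryTheory

/-- A generator of the reduced standard presentation of a category `C`. -/
def Gen (C : Type*) [Category C] : Type _ := Σ x y : C, x ⟶ y

/-- A generator is a non-identity morphism. -/
def NonId {C : Type*} [Category C] (g : Gen C) : Prop :=
  ∀ x : C, g ≠ ⟨x, x, 𝟙 x⟩

/-- A rewriting step of the reduced standard presentation of `C`. -/
def RStep {C : Type*} [Category C] (a b : List (Gen C)) : Prop :=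
  ∃ (pre post : List (Gen C)) (x y z : C) (u : x ⟶ y) (v : y ⟶ z),
    NonId ⟨x, y, u⟩ ∧ NonId ⟨y, z, v⟩ ∧
    a = pre ++ [⟨x, y, u⟩, ⟨y, z, v⟩] ++ post ∧
    ((NonId ⟨x, z, u ≫ v⟩ ∧ b = pre ++ [⟨x, z, u ≫ v⟩] ++ post) ∨
     (¬ NonId ⟨x, z, u ≫ v⟩ ∧ b = pre ++ post))

/-- A word of generators evaluates to the morphism `f : x ⟶ y` of `C`. -/
def Evals {C : Type*} [Category C] : List (Gen C) → ∀ (x y : C), (x ⟶ y) → Prop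
  | [] => fun x y f => ∃ h : x = y, f = eqToHom h
  | g :: l => fun x y f =>
      ∃ (z : C) (u : x ⟶ z) (k : z ⟶ y), g = ⟨x, z, u⟩ ∧ Evals l z y k ∧ f = u ≫ k

namespace Gen

variable {C : Type*} [Category C]

lemma mk_eq_mk_iff {x y x' y' : C} {u : x ⟶ y} {u' : x' ⟶ y'} :
    (⟨x, y, u⟩ : Gen C) = ⟨x', y', u'⟩ ↔ x = x' ∧ y = y' ∧ HEq u u' := by
  constructor
  · intro h
    obtain ⟨rfl, h⟩ := Sigma.mk.inj_iff.mp h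
    obtain ⟨rfl, h⟩ := Sigma.mk.inj_iff.mp (eq_of_heq h)
    exact ⟨rfl, rfl, h⟩
  · rintro ⟨rfl, rfl, h⟩
    rw [eq_of_heq h]

lemma not_nonId_iff {x y : C} {u : x ⟶ y} :
    ¬ NonId (⟨x, y, u⟩ : Gen C) ↔ ∃ h : x = y, u = eqToHom h := by
  simp only [NonId, not_forall, not_not]
  constructor
  · rintro ⟨z, hz⟩
    obtain ⟨rfl, rfl, h⟩ := mk_eq_mk_iff.mp hz
    exact ⟨rfl, eq_of_heq h⟩
  · rintro ⟨rfl, rfl⟩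
    exact ⟨x, rfl⟩

def Redex (g h : Gen C) : Prop := NonId g ∧ NonId h ∧ g.2.1 = h.1

def comp (g h : Gen C) (e : g.2.1 = h.1) : Gen C := ⟨g.1, h.2.1, g.2.2 ≫ eqToHom e ≫ h.2.2⟩

lemma mk_comp_mk {x y z : C} (u : x ⟶ y) (v : y ⟶ z) (e) :
    comp (⟨x, y, u⟩ : Gen C) ⟨y, z, v⟩ e = ⟨x, z, u ≫ v⟩ := by
  simp only [comp, eqToHom_refl, Category.id_comp]
  rfl

lemma comp_assoc (g h k : Gen C) (e₁ : g.2.1 = h.1) (e₂ : h.2.1 = k.1) :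
    (g.comp h e₁).comp k e₂ = g.comp (h.comp k e₂) e₁ := by
  obtain ⟨x, y, u⟩ := g
  obtain ⟨y', z, v⟩ := h
  obtain ⟨z', t, w⟩ := k
  cases e₁; cases e₂
  simp only [mk_comp_mk, Category.assoc]
  rfl

lemma comp_of_not_nonId_left {g : Gen C} (hg : ¬ NonId g) (h : Gen C) (e : g.2.1 = h.1) :
    g.comp h e = h := by
  obtain ⟨x, y, u⟩ := g
  obtain ⟨rfl, rfl⟩ := not_nonId_iff.mp hg
  obtain ⟨y', z, v⟩ := h
  cases e
  rw [mk_comp_mk, eqToHom_refl, Category.id_comp]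

lemma comp_of_not_nonId_right (g : Gen C) {h : Gen C} (hh : ¬ NonId h) (e : g.2.1 = h.1) :
    g.comp h e = g := by
  obtain ⟨y', z, v⟩ := h
  obtain ⟨rfl, rfl⟩ := not_nonId_iff.mp hh
  obtain ⟨x, y, u⟩ := g
  cases e
  rw [mk_comp_mk, eqToHom_refl, Category.comp_id]

open Classical in
noncomputable def toWord (g : Gen C) : List (Gen C) := if NonId g then [g] else []

lemma toWord_of_nonId {g : Gen C} (hg : NonId g) : g.toWord = [g] := if_pos hg

lemma toWord_of_not_nonId {g : Gen C} (hg : ¬ NonId g) : g.toWord = [] := if_neg hg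

lemma nonId_of_mem_toWord {g p : Gen C} (hp : p ∈ g.toWord) : NonId p := by
  by_cases hg : NonId g
  · rw [toWord_of_nonId hg, List.mem_singleton] at hp
    exact hp ▸ hg
  · simp [toWord_of_not_nonId hg] at hp

lemma not_redex_of_target_eq {g g' k : Gen C} (hg' : NonId g') (e : g.2.1 = g'.2.1)
    (h : ¬ g'.Redex k) : ¬ g.Redex k :=
  fun ⟨_, hk, ek⟩ => h ⟨hg', hk, e ▸ ek⟩

end Gen

namespace RStep

variable {C : Type*} [Category C]

open Gen Relation

lemma iff_exists {a b : List (Gen C)} :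
    RStep a b ↔ ∃ (pre post : List (Gen C)) (g h : Gen C) (hr : g.Redex h),
      a = pre ++ g :: h :: post ∧ b = pre ++ (g.comp h hr.2.2).toWord ++ post := by
  constructor
  · rintro ⟨pre, post, x, y, z, u, v, hu, hv, rfl, hb⟩
    refine ⟨pre, post, ⟨x, y, u⟩, ⟨y, z, v⟩, ⟨hu, hv, rfl⟩, List.append_assoc _ _ _, ?_⟩
    rw [mk_comp_mk]
    rcases hb with ⟨huv, rfl⟩ | ⟨huv, rfl⟩
    · rw [toWord_of_nonId huv]
    · rw [toWord_of_not_nonId huv, List.append_nil]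
  · rintro ⟨pre, post, ⟨x, y, u⟩, ⟨y', z, v⟩, ⟨hu, hv, e⟩, rfl, rfl⟩
    obtain rfl : y = y' := e
    refine ⟨pre, post, x, y, z, u, v, hu, hv, (List.append_assoc pre [_, _] post).symm, ?_⟩
    rw [mk_comp_mk]
    by_cases huv : NonId (⟨x, z, u ≫ v⟩ : Gen C)
    · exact .inl ⟨huv, by rw [toWord_of_nonId huv]⟩
    · exact .inr ⟨huv, by rw [toWord_of_not_nonId huv, List.append_nil]⟩

lemma cons {a b : List (Gen C)} (k : Gen C) (hs : RStep a b) : RStep (k :: a) (k :: b) := by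
  obtain ⟨pre, post, g, h, hr, rfl, rfl⟩ := iff_exists.mp hs
  exact iff_exists.mpr ⟨k :: pre, post, g, h, hr, rfl, rfl⟩

lemma of_redex {g h : Gen C} (hr : g.Redex h) (t : List (Gen C)) :
    RStep (g :: h :: t) ((g.comp h hr.2.2).toWord ++ t) :=
  iff_exists.mpr ⟨[], t, g, h, hr, rfl, rfl⟩

def IsNormal (m : List (Gen C)) : Prop := m.IsChain fun g h => ¬ g.Redex h

open Classical in
/-- On a normal word `m`, this is the normal form of `g :: m`. -/
noncomputable def normalCons (g : Gen C) : List (Gen C) → List (Gen C)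
  | [] => [g]
  | h :: t => if hr : g.Redex h then (g.comp h hr.2.2).toWord ++ t else g :: h :: t

open Classical in
/-- `normalCons` keeps identity generators, which no step removes; discarding them makes this an
action of `C` on normal words (`normalAct_normalAct`). -/
noncomputable def normalAct (g : Gen C) (m : List (Gen C)) : List (Gen C) :=
  if NonId g then normalCons g m else m

noncomputable def normalForm (l : List (Gen C)) : List (Gen C) := l.foldr normalCons []

lemma normalCons_of_redex {g h : Gen C} (hr : g.Redex h) (t : List (Gen C)) :
    normalCons g (h :: t) = (g.comp h hr.2.2).toWord ++ t := by
  rw [normalCons, dif_pos hr]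

lemma normalCons_of_not_redex {g h : Gen C} (hr : ¬ g.Redex h) (t : List (Gen C)) :
    normalCons g (h :: t) = g :: h :: t := by
  rw [normalCons, dif_neg hr]

lemma normalCons_eq_cons {g : Gen C} {m : List (Gen C)} (hr : ∀ k ∈ m.head?, ¬ g.Redex k) :
    normalCons g m = g :: m := by
  cases m with
  | nil => rfl
  | cons k t => exact normalCons_of_not_redex (hr k rfl) t

lemma normalAct_of_nonId {g : Gen C} (hg : NonId g) (m : List (Gen C)) :
    normalAct g m = normalCons g m := if_pos hg

lemma normalAct_of_not_nonId {g : Gen C} (hg : ¬ NonId g) (m : List (Gen C)) :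
    normalAct g m = m := if_neg hg

lemma isNormal_normalCons (g : Gen C) {m : List (Gen C)} (hm : IsNormal m) :
    IsNormal (normalCons g m) := by
  cases m with
  | nil => exact List.isChain_singleton g
  | cons h t =>
    by_cases hr : g.Redex h
    · obtain ⟨hh, ht⟩ := List.isChain_cons.mp hm
      rw [normalCons_of_redex hr]
      by_cases hgh : NonId (g.comp h hr.2.2)
      · rw [toWord_of_nonId hgh]
        exact List.isChain_cons.mpr ⟨fun p hp => not_redex_of_target_eq hr.2.1 rfl (hh p hp), ht⟩
      · rwa [toWord_of_not_nonId hgh]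
    · rw [normalCons_of_not_redex hr]
      exact List.isChain_cons_cons.mpr ⟨hr, hm⟩

lemma isNormal_normalForm : ∀ l : List (Gen C), IsNormal (normalForm l)
  | [] => List.isChain_nil
  | g :: l => isNormal_normalCons g (isNormal_normalForm l)

lemma normalAct_cons {f k : Gen C} {t : List (Gen C)} (hk : NonId k) (hm : IsNormal (k :: t))
    (e : f.2.1 = k.1) : normalAct f (k :: t) = normalAct (f.comp k e) t := by
  have hcons : ∀ g : Gen C, g.2.1 = k.2.1 → normalCons g t = g :: t := fun g eg =>
    normalCons_eq_cons fun p hp =>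
      not_redex_of_target_eq hk eg ((List.isChain_cons.mp hm).1 p hp)
  by_cases hf : NonId f
  · rw [normalAct_of_nonId hf, normalCons_of_redex ⟨hf, hk, e⟩]
    by_cases hfk : NonId (f.comp k e)
    · rw [toWord_of_nonId hfk, normalAct_of_nonId hfk, hcons (f.comp k e) rfl]
      rfl
    · rw [toWord_of_not_nonId hfk, normalAct_of_not_nonId hfk]
      rfl
  · rw [normalAct_of_not_nonId hf, comp_of_not_nonId_left hf, normalAct_of_nonId hk,
      hcons k rfl]

lemma normalAct_normalAct_of_not_redex {g h : Gen C} (e : g.2.1 = h.1) {m : List (Gen C)}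
    (hm : IsNormal m) (hr : ∀ k ∈ m.head?, ¬ h.Redex k) :
    normalAct g (normalAct h m) = normalAct (g.comp h e) m := by
  by_cases hh : NonId h
  · rw [normalAct_of_nonId hh, normalCons_eq_cons hr]
    exact normalAct_cons hh (List.isChain_cons.mpr ⟨hr, hm⟩) e
  · rw [normalAct_of_not_nonId hh, comp_of_not_nonId_right g hh]

lemma normalAct_normalAct {g h : Gen C} (e : g.2.1 = h.1) {m : List (Gen C)} (hm : IsNormal m) :
    normalAct g (normalAct h m) = normalAct (g.comp h e) m := by
  induction m generalizing h with
  | nil => exact normalAct_normalAct_of_not_redex e hm nofun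
  | cons k t ih =>
    by_cases hr : h.Redex k
    · calc normalAct g (normalAct h (k :: t))
          = normalAct g (normalAct (h.comp k hr.2.2) t) := by rw [normalAct_cons hr.2.1 hm]
        _ = normalAct (g.comp (h.comp k hr.2.2) e) t :=
          ih (h := h.comp k hr.2.2) e (List.isChain_cons.mp hm).2
        _ = normalAct ((g.comp h e).comp k hr.2.2) t :=
          congrArg (normalAct · t) (Gen.comp_assoc g h k e hr.2.2).symm
        _ = normalAct (g.comp h e) (k :: t) := (normalAct_cons hr.2.1 hm _).symm
    · exact normalAct_normalAct_of_not_redex e hm fun k' hk' => by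
        obtain rfl : k = k' := Option.some_injective _ hk'
        exact hr

lemma normalForm_append (l₁ l₂ : List (Gen C)) :
    normalForm (l₁ ++ l₂) = l₁.foldr normalCons (normalForm l₂) :=
  List.foldr_append

lemma normalForm_toWord_append (g : Gen C) (l : List (Gen C)) :
    normalForm (g.toWord ++ l) = normalAct g (normalForm l) := by
  by_cases hg : NonId g
  · rw [toWord_of_nonId hg, normalAct_of_nonId hg]
    rfl
  · rw [toWord_of_not_nonId hg, normalAct_of_not_nonId hg, List.nil_append]

lemma normalForm_cons_cons_of_redex {g h : Gen C} (hr : g.Redex h) (l : List (Gen C)) :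
    normalForm (g :: h :: l) = normalForm ((g.comp h hr.2.2).toWord ++ l) := by
  rw [normalForm_toWord_append, ← normalAct_normalAct hr.2.2 (isNormal_normalForm l),
    normalAct_of_nonId hr.2.1, normalAct_of_nonId hr.1]
  rfl

lemma normalForm_eq {a b : List (Gen C)} (hs : RStep a b) : normalForm a = normalForm b := by
  obtain ⟨pre, post, g, h, hr, rfl, rfl⟩ := iff_exists.mp hs
  rw [List.append_assoc, normalForm_append, normalForm_append, normalForm_cons_cons_of_redex hr]

lemma reflTransGen_normalCons (g : Gen C) (m : List (Gen C)) :
    ReflTransGen RStep (g :: m) (normalCons g m) := by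
  cases m with
  | nil => rfl
  | cons h t =>
    by_cases hr : g.Redex h
    · rw [normalCons_of_redex hr]
      exact .single (of_redex hr t)
    · rw [normalCons_of_not_redex hr]

lemma reflTransGen_normalForm : ∀ l : List (Gen C), ReflTransGen RStep l (normalForm l)
  | [] => .refl
  | g :: l => ((reflTransGen_normalForm l).lift (g :: ·) fun _ _ => cons g).trans
      (reflTransGen_normalCons g _)

lemma normalForm_eq_of_reflTransGen {a b : List (Gen C)} (h : ReflTransGen RStep a b) :
    normalForm a = normalForm b := by
  induction h with
  | refl => rfl
  | tail _ hs ih => exact ih.trans (normalForm_eq hs)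

lemma join_of_reflTransGen {a b c : List (Gen C)} (hab : ReflTransGen RStep a b)
    (hac : ReflTransGen RStep a c) : Join (ReflTransGen RStep) b c :=
  ⟨normalForm a, normalForm_eq_of_reflTransGen hab ▸ reflTransGen_normalForm b,
    normalForm_eq_of_reflTransGen hac ▸ reflTransGen_normalForm c⟩

lemma nonId_of_mem {a b : List (Gen C)} (hs : RStep a b) (ha : ∀ p ∈ a, NonId p) :
    ∀ p ∈ b, NonId p := by
  obtain ⟨pre, post, g, h, hr, rfl, rfl⟩ := iff_exists.mp hs
  simp only [List.mem_append, List.mem_cons] at ha ⊢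
  rintro p ((hp | hp) | hp)
  · exact ha p (.inl hp)
  · exact nonId_of_mem_toWord hp
  · exact ha p (.inr (.inr (.inr hp)))

lemma nonId_of_mem_of_reflTransGen {a b : List (Gen C)} (hs : ReflTransGen RStep a b)
    (ha : ∀ p ∈ a, NonId p) : ∀ p ∈ b, NonId p := by
  induction hs with
  | refl => exact ha
  | tail _ hs ih => exact nonId_of_mem hs ih

lemma eqvGen_iff_normalForm_eq {a b : List (Gen C)} :
    EqvGen RStep a b ↔ normalForm a = normalForm b := by
  have hnf : ∀ l : List (Gen C), EqvGen RStep l (normalForm l) := fun l =>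
    reflTransGen_le_of_equivalence_of_le (EqvGen.is_equivalence _) EqvGen.rel _ _
      (reflTransGen_normalForm l)
  refine ⟨fun h => ?_, fun h => (hnf a).trans _ _ _ (h ▸ (hnf b).symm)⟩
  exact (InvImage.equivalence _ normalForm eq_equivalence).eqvGen_iff.mp
    (h.mono fun _ _ => normalForm_eq)

end RStep

namespace Evals

variable {C : Type*} [Category C]

open Gen Relation RStep

lemma unique {l : List (Gen C)} {x y : C} {f f' : x ⟶ y} (hf : Evals l x y f)
    (hf' : Evals l x y f') : f = f' := by
  induction l generalizing x with
  | nil =>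
    obtain ⟨e, rfl⟩ := hf
    obtain ⟨_, rfl⟩ := hf'
    rfl
  | cons g l ih =>
    obtain ⟨z, u, k, rfl, hk, rfl⟩ := hf
    obtain ⟨z', u', k', hg, hk', rfl⟩ := hf'
    obtain ⟨-, rfl, hu⟩ := mk_eq_mk_iff.mp hg
    rw [eq_of_heq hu, ih hk hk']

lemma append_of_imp {l l' : List (Gen C)} {y : C}
    (H : ∀ (z : C) (k : z ⟶ y), Evals l z y k → Evals l' z y k) :
    ∀ {pre : List (Gen C)} {x : C} {f : x ⟶ y}, Evals (pre ++ l) x y f → Evals (pre ++ l') x y f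
  | [], _, _, hf => H _ _ hf
  | _ :: _, _, _, ⟨z, u, k, hg, hk, hf⟩ => ⟨z, u, k, hg, append_of_imp H hk, hf⟩

lemma toWord_append_of_cons {g : Gen C} {l : List (Gen C)} {x y : C} {f : x ⟶ y}
    (hf : Evals (g :: l) x y f) : Evals (g.toWord ++ l) x y f := by
  by_cases hg : NonId g
  · rwa [toWord_of_nonId hg]
  · rw [toWord_of_not_nonId hg, List.nil_append]
    obtain ⟨z, u, k, rfl, hk, rfl⟩ := hf
    obtain ⟨rfl, rfl⟩ := not_nonId_iff.mp hg
    simpa using hk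

lemma comp_toWord_append_of_cons_cons {g h : Gen C} (e : g.2.1 = h.1) {l : List (Gen C)} {x y : C}
    {f : x ⟶ y} (hf : Evals (g :: h :: l) x y f) : Evals ((g.comp h e).toWord ++ l) x y f := by
  obtain ⟨z, u, k, rfl, ⟨w, v, k', rfl, hk', rfl⟩, rfl⟩ := hf
  rw [mk_comp_mk]
  exact toWord_append_of_cons ⟨w, u ≫ v, k', rfl, hk', (Category.assoc u v k').symm⟩

lemma of_rStep {a b : List (Gen C)} (hs : RStep a b) {x y : C} {f : x ⟶ y}
    (hf : Evals a x y f) : Evals b x y f := by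
  obtain ⟨pre, post, g, h, hr, rfl, rfl⟩ := iff_exists.mp hs
  rw [List.append_assoc]
  exact append_of_imp (fun _ _ => comp_toWord_append_of_cons_cons hr.2.2) hf

lemma of_reflTransGen {a b : List (Gen C)} (hs : ReflTransGen RStep a b) {x y : C}
    {f : x ⟶ y} (hf : Evals a x y f) : Evals b x y f := by
  induction hs with
  | refl => exact hf
  | tail _ hs ih => exact of_rStep hs ih

lemma eq_toWord_of_isNormal {l : List (Gen C)} (hn : IsNormal l) (hl : ∀ p ∈ l, NonId p)
    {x y : C} {f : x ⟶ y} (hf : Evals l x y f) : l = toWord ⟨x, y, f⟩ := by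
  match l, hf with
  | [], hf => exact (toWord_of_not_nonId (not_nonId_iff.mpr hf)).symm
  | [g], ⟨z, u, k, hg, ⟨e, hk⟩, hf⟩ =>
    subst hg e hk hf
    rw [eqToHom_refl, Category.comp_id, toWord_of_nonId (hl _ (List.mem_singleton_self _))]
  | g :: h :: t, ⟨z, u, k, hg, ⟨w, v, k', hh, _, _⟩, _⟩ =>
    subst hg hh
    exact ((List.isChain_cons_cons.mp hn).1
      ⟨hl _ List.mem_cons_self, hl _ (List.mem_cons_of_mem _ List.mem_cons_self), rfl⟩).elim

end Evals

/-- The reduced standard presentation of a category `C` is locally confluent; its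
critical branchings, the pairs `(μ_{u,v} w̄, ū μ_{v,w})` arising from words
`[ū, v̄, w̄]` for composable non-identity triples `(u,v,w)`, are all confluent; hence,
being also terminating, the presentation is convergent and presents `C`. -/
theorem reduced_standard_presentation_convergent_and_presents {C : Type*} [Category C] :
    -- confluence of the critical branchings on the words `[ū, v̄, w̄]`
    (∀ (x y z t : C) (u : x ⟶ y) (v : y ⟶ z) (w : z ⟶ t),
      NonId ⟨x, y, u⟩ → NonId ⟨y, z, v⟩ → NonId ⟨z, t, w⟩ →
      ∀ a b : List (Gen C),
        RStep [⟨x, y, u⟩, ⟨y, z, v⟩, ⟨z, t, w⟩] a →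
        RStep [⟨x, y, u⟩, ⟨y, z, v⟩, ⟨z, t, w⟩] b →
        ∃ c, Relation.ReflTransGen (@RStep C _) a c ∧
          Relation.ReflTransGen (@RStep C _) b c) ∧
    -- local confluence
    (∀ a b c : List (Gen C), RStep a b → RStep a c →
      ∃ d, Relation.ReflTransGen (@RStep C _) b d ∧
        Relation.ReflTransGen (@RStep C _) c d) ∧
    -- confluence
    (∀ a b c : List (Gen C),
      Relation.ReflTransGen (@RStep C _) a b → Relation.ReflTransGen (@RStep C _) a c →
      ∃ d, Relation.ReflTransGen (@RStep C _) b d ∧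
        Relation.ReflTransGen (@RStep C _) c d) ∧
    -- the presentation presents `C`: two words of non-identity generators evaluating
    -- to parallel morphisms are congruent iff these morphisms are equal
    (∀ (x y : C) (f g : x ⟶ y) (a b : List (Gen C)),
      (∀ h ∈ a, NonId h) → (∀ h ∈ b, NonId h) →
      Evals a x y f → Evals b x y g →
      (Relation.EqvGen (@RStep C _) a b ↔ f = g)) := by
  refine ⟨fun _ _ _ _ _ _ _ _ _ _ a b ha hb => RStep.join_of_reflTransGen (.single ha) (.single hb),
    fun _ _ _ hab hac => RStep.join_of_reflTransGen (.single hab) (.single hac),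
    fun _ _ _ => RStep.join_of_reflTransGen, fun x y f g a b ha hb hfa hgb => ?_⟩
  have hfa' := hfa.of_reflTransGen (RStep.reflTransGen_normalForm a)
  have hgb' := hgb.of_reflTransGen (RStep.reflTransGen_normalForm b)
  rw [RStep.eqvGen_iff_normalForm_eq]
  refine ⟨fun hab => hfa'.unique (hab ▸ hgb'), ?_⟩
  rintro rfl
  rw [hfa'.eq_toWord_of_isNormal (RStep.isNormal_normalForm a)
      (RStep.nonId_of_mem_of_reflTransGen (RStep.reflTransGen_normalForm a) ha),
    hgb'.eq_toWord_of_isNormal (RStep.isNormal_normalForm b)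
      (RStep.nonId_of_mem_of_reflTransGen (RStep.reflTransGen_normalForm b) hb)]
end

section
/- Every convergent string rewriting system is Tietze-equivalent to a reduced convergent string rewriting system (with the same set of generators); moreover if the original system is finite, the reduced one can be chosen finite. Here 'reduced' means: for every rule u ⇒ v, the word v is irreducible for all rules, and u is irreducible for all rules other than u ⇒ v itself. -/
/-- A rewriting step of a string rewriting system `R`. -/
def Step {α : Type*} (R : Set (List α × List α)) (u v : List α) : Prop :=
  ∃ l r p, p ∈ R ∧ u = l ++ p.1 ++ r ∧ v = l ++ p.2 ++ r

/-- A word is irreducible (a normal form) when no rule applies to it. -/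
def IsNormalForm {α : Type*} (R : Set (List α × List α)) (u : List α) : Prop :=
  ∀ v, ¬ Step R u v

/-- A string rewriting system is reduced when, for every rule `u ⇒ v`, the target `v`
is irreducible for all rules and the source `u` is irreducible for all rules other
than `u ⇒ v` itself. -/
def Reduced {α : Type*} (R : Set (List α × List α)) : Prop :=
  ∀ p ∈ R, IsNormalForm R p.2 ∧ IsNormalForm (R \ {p}) p.1

/-!
Keep only the rules whose source is minimal (contains no other source as a factor), with the
target replaced by the normal form of that source. Each new rule is a nonempty derivation of the
old system, and every reducible word contains a minimal source, so both systems have the same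
normal forms; termination, confluence and the congruence therefore transfer. By confluence a
minimal source has a single new target, which makes the new system reduced and no larger than
the old one.
-/

namespace Relation

variable {β : Type*} {r s : β → β → Prop}

def Confluent (r : β → β → Prop) : Prop :=
  ∀ ⦃a b c⦄, ReflTransGen r a b → ReflTransGen r a c → Join (ReflTransGen r) b c

theorem ReflTransGen.eq_of_normal {a b : β} (ha : ∀ c, ¬ r a c) (h : ReflTransGen r a b) :
    a = b := by
  rcases h.cases_head with rfl | ⟨c, hac, -⟩
  · rfl
  · exact absurd hac (ha c)

theorem exists_reflTransGen_normal (hwf : WellFounded (flip r)) (a : β) :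
    ∃ b, ReflTransGen r a b ∧ ∀ c, ¬ r b c := by
  induction a using hwf.induction with
  | _ a ih =>
    by_cases ha : ∀ c, ¬ r a c
    · exact ⟨a, .refl, ha⟩
    · push Not at ha
      obtain ⟨c, hac⟩ := ha
      obtain ⟨b, hcb, hb⟩ := ih c hac
      exact ⟨b, .head hac hcb, hb⟩

theorem Confluent.eq_of_normal (hconf : Confluent r) {a b c : β} (hab : ReflTransGen r a b)
    (hac : ReflTransGen r a c) (hb : ∀ d, ¬ r b d) (hc : ∀ d, ¬ r c d) : b = c := by
  obtain ⟨d, hbd, hcd⟩ := hconf hab hac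
  rw [hbd.eq_of_normal hb, hcd.eq_of_normal hc]

theorem wellFounded_flip_of_le_transGen (hsub : ∀ a b, s a b → TransGen r a b)
    (hwf : WellFounded (flip r)) : WellFounded (flip s) :=
  Subrelation.wf (fun h => transGen_swap.mpr (hsub _ _ h)) hwf.transGen

theorem reflTransGen_of_le_transGen (hsub : ∀ a b, s a b → TransGen r a b) {a b : β}
    (h : ReflTransGen s a b) : ReflTransGen r a b :=
  reflTransGen_closed (fun a b h => (hsub a b h).to_reflTransGen) a b h

theorem eq_of_reflTransGen_normal (hconf : Confluent r) (hsub : ∀ a b, s a b → TransGen r a b)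
    (hnf : ∀ a b, r a b → ∃ c, s a c) {a b a' b' : β} (hab : ReflTransGen r a b)
    (ha' : ReflTransGen s a a') (hb' : ReflTransGen s b b') (ha'nf : ∀ c, ¬ s a' c)
    (hb'nf : ∀ c, ¬ s b' c) : a' = b' :=
  hconf.eq_of_normal (reflTransGen_of_le_transGen hsub ha')
    (hab.trans (reflTransGen_of_le_transGen hsub hb'))
    (fun c h => let ⟨d, hd⟩ := hnf a' c h; ha'nf d hd)
    (fun c h => let ⟨d, hd⟩ := hnf b' c h; hb'nf d hd)

theorem Confluent.of_le_transGen (hconf : Confluent r) (hwf : WellFounded (flip s))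
    (hsub : ∀ a b, s a b → TransGen r a b) (hnf : ∀ a b, r a b → ∃ c, s a c) : Confluent s := by
  intro w a b hwa hwb
  obtain ⟨a', haa', ha'⟩ := exists_reflTransGen_normal hwf a
  obtain ⟨b', hbb', hb'⟩ := exists_reflTransGen_normal hwf b
  have : a' = b' :=
    eq_of_reflTransGen_normal hconf hsub hnf .refl (hwa.trans haa') (hwb.trans hbb') ha' hb'
  exact ⟨a', haa', this ▸ hbb'⟩

theorem eqvGen_eq_of_le_transGen (hconf : Confluent r) (hwf : WellFounded (flip s))
    (hsub : ∀ a b, s a b → TransGen r a b) (hnf : ∀ a b, r a b → ∃ c, s a c) :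
    EqvGen r = EqvGen s := by
  refine le_antisymm (EqvGen.eqvGen_le fun a b hab => ?_)
    (EqvGen.eqvGen_le fun a b hab => EqvGen.transGen_le_eqvGen r a b (hsub a b hab))
  obtain ⟨a', haa', ha'⟩ := exists_reflTransGen_normal hwf a
  obtain ⟨b', hbb', hb'⟩ := exists_reflTransGen_normal hwf b
  have : a' = b' := eq_of_reflTransGen_normal hconf hsub hnf (.single hab) haa' hbb' ha' hb'
  subst this
  exact (EqvGen.reflTransGen_le_eqvGen s a a' haa').trans _ _ _
    ((EqvGen.reflTransGen_le_eqvGen s b a' hbb').symm _ _)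

end Relation

open Relation

section StringRewriting

variable {α : Type*} {R : Set (List α × List α)}

theorem Step.of_mem {p : List α × List α} (hp : p ∈ R) : Step R p.1 p.2 :=
  ⟨[], [], p, hp, by simp, by simp⟩

theorem Step.append_append {u v : List α} (h : Step R u v) (l r : List α) :
    Step R (l ++ u ++ r) (l ++ v ++ r) := by
  obtain ⟨l', r', p, hp, rfl, rfl⟩ := h
  exact ⟨l ++ l', r' ++ r, p, hp, by simp, by simp⟩

theorem transGen_step_append_append {u v : List α} (h : TransGen (Step R) u v) (l r : List α) :
    TransGen (Step R) (l ++ u ++ r) (l ++ v ++ r) :=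
  h.lift (fun w => l ++ w ++ r) fun _ _ hab => hab.append_append l r

def IsMinimalSource (R : Set (List α × List α)) (u : List α) : Prop :=
  (∃ v, (u, v) ∈ R) ∧ ∀ p ∈ R, p.1 <:+: u → p.1 = u

def reducedSystem (R : Set (List α × List α)) : Set (List α × List α) :=
  {p | IsMinimalSource R p.1 ∧ ReflTransGen (Step R) p.1 p.2 ∧ IsNormalForm R p.2}

theorem exists_isMinimalSource_infix {w x : List α} (h : Step R w x) :
    ∃ u, IsMinimalSource R u ∧ u <:+: w := by
  obtain ⟨l, r, p, hp, rfl, -⟩ := h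
  obtain ⟨u, ⟨⟨v, huv⟩, huw⟩, hmin⟩ := (measure List.length).wf.has_min
    {u | (∃ v, (u, v) ∈ R) ∧ u <:+: l ++ p.1 ++ r} ⟨p.1, ⟨p.2, hp⟩, ⟨l, r, rfl⟩⟩
  refine ⟨u, ⟨⟨v, huv⟩, fun q hq hqu => hqu.eq_of_length_le ?_⟩, huw⟩
  exact not_lt.mp (hmin q.1 ⟨⟨q.2, hq⟩, hqu.trans huw⟩)

theorem transGen_of_step_reducedSystem {u v : List α} (h : Step (reducedSystem R) u v) :
    TransGen (Step R) u v := by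
  obtain ⟨l, r, p, ⟨⟨⟨v₀, hv₀⟩, -⟩, hred, hnf⟩, rfl, rfl⟩ := h
  refine transGen_step_append_append ?_ l r
  rcases reflTransGen_iff_eq_or_transGen.mp hred with heq | htrans
  · exact absurd (Step.of_mem hv₀) (heq ▸ hnf _)
  · exact htrans

theorem exists_step_reducedSystem (hterm : WellFounded (fun v u => Step R u v)) {w x : List α}
    (h : Step R w x) : ∃ y, Step (reducedSystem R) w y := by
  obtain ⟨u, hu, l, r, rfl⟩ := exists_isMinimalSource_infix h
  obtain ⟨v, huv, hv⟩ := exists_reflTransGen_normal hterm u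
  exact ⟨l ++ v ++ r, l, r, (u, v), ⟨hu, huv, hv⟩, rfl, rfl⟩

theorem IsNormalForm.reducedSystem {w : List α} (h : IsNormalForm R w) :
    IsNormalForm (reducedSystem R) w := fun _ hx =>
  let ⟨y, hy, _⟩ := TransGen.head'_iff.mp (transGen_of_step_reducedSystem hx)
  h y hy

theorem injOn_fst_reducedSystem (hconf : Confluent (Step R)) :
    Set.InjOn Prod.fst (reducedSystem R) := fun _ ⟨_, hp, hpnf⟩ _ ⟨_, hq, hqnf⟩ hpq =>
  Prod.ext hpq (hconf.eq_of_normal hp (hpq ▸ hq) hpnf hqnf)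

theorem reduced_reducedSystem (hconf : Confluent (Step R)) : Reduced (reducedSystem R) := by
  intro p hp
  refine ⟨hp.2.2.reducedSystem, ?_⟩
  rintro x ⟨l, r, q, ⟨hq, hqp⟩, hsrc, -⟩
  obtain ⟨⟨v, hqv⟩, -⟩ := hq.1
  have hsrc_eq : q.1 = p.1 := hp.1.2 (q.1, v) hqv ⟨l, r, hsrc.symm⟩
  exact hqp (injOn_fst_reducedSystem hconf hq hp hsrc_eq)

theorem finite_reducedSystem (hconf : Confluent (Step R)) (hfin : R.Finite) :
    (reducedSystem R).Finite := by
  refine Set.Finite.of_finite_image ((hfin.image Prod.fst).subset ?_)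
    (injOn_fst_reducedSystem hconf)
  rintro _ ⟨p, ⟨⟨⟨v, hv⟩, -⟩, -⟩, rfl⟩
  exact ⟨(p.1, v), hv, rfl⟩

end StringRewriting

/-- Every convergent string rewriting system is Tietze-equivalent (generates the same
congruence on words over the same generators) to a reduced convergent string rewriting
system; moreover, if the original system is finite, the reduced one can be chosen
finite. -/
theorem reduced_convergent_of_convergent {α : Type*} (R : Set (List α × List α))
    (hterm : WellFounded (fun v u => Step R u v))
    (hconf : ∀ w a b, Relation.ReflTransGen (Step R) w a →
      Relation.ReflTransGen (Step R) w b →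
      ∃ c, Relation.ReflTransGen (Step R) a c ∧ Relation.ReflTransGen (Step R) b c) :
    ∃ R' : Set (List α × List α),
      Reduced R' ∧
      WellFounded (fun v u => Step R' u v) ∧
      (∀ w a b, Relation.ReflTransGen (Step R') w a →
        Relation.ReflTransGen (Step R') w b →
        ∃ c, Relation.ReflTransGen (Step R') a c ∧
          Relation.ReflTransGen (Step R') b c) ∧
      (∀ u v, Relation.EqvGen (Step R) u v ↔ Relation.EqvGen (Step R') u v) ∧
      (R.Finite → R'.Finite) := by
  have hsub : ∀ u v, Step (reducedSystem R) u v → TransGen (Step R) u v :=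
    fun _ _ => transGen_of_step_reducedSystem
  have hnf : ∀ u v, Step R u v → ∃ w, Step (reducedSystem R) u w :=
    fun _ _ => exists_step_reducedSystem hterm
  have hterm' := wellFounded_flip_of_le_transGen hsub hterm
  refine ⟨reducedSystem R, reduced_reducedSystem hconf, hterm',
    Confluent.of_le_transGen hconf hterm' hsub hnf, fun u v => ?_,
    finite_reducedSystem hconf⟩
  rw [eqvGen_eq_of_le_transGen hconf hterm' hsub hnf]
end

section
/- In a reduced string rewriting system, the rewriting steps with a given source word u are totally ordered by the position of the rewritten factor: if two rewriting steps v·φ·v' and w·ψ·w' (with φ, ψ rules and v, v', w, w' words) have the same source u and the prefix v has the same length as the prefix w, then the two steps are equal. -/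
section

variable {α : Type*} {R : Set (List α × List α)}

theorem IsNormalForm.not_infix {u : List α} (hu : IsNormalForm R u) {p : List α × List α}
    (hp : p ∈ R) : ¬ p.1 <:+: u := by
  rintro ⟨l, r, rfl⟩
  exact hu (l ++ p.2 ++ r) ⟨l, r, p, hp, rfl, rfl⟩

theorem Reduced.eq_of_prefix (hred : Reduced R) {φ ψ : List α × List α} (hφ : φ ∈ R)
    (hψ : ψ ∈ R) (h : φ.1 <+: ψ.1) : φ = ψ := by
  by_contra hne
  exact (hred ψ hψ).2.not_infix ⟨hφ, hne⟩ h.isInfix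

end

/-- In a reduced string rewriting system, rewriting steps with the same source word are
totally ordered by the position of the rewritten factor: if two rewriting steps
`v·φ·v'` and `w·ψ·w'` have the same source and the prefixes `v` and `w` have the same
length, then the two steps are equal (`v = w`, `φ = ψ`, `v' = w'`). -/
theorem reduced_steps_antisymm {α : Type*} (R : Set (List α × List α))
    (hred : Reduced R) (φ ψ : List α × List α) (hφ : φ ∈ R) (hψ : ψ ∈ R)
    (v v' w w' : List α)
    (hsrc : v ++ φ.1 ++ v' = w ++ ψ.1 ++ w')
    (hlen : v.length = w.length) :
    v = w ∧ φ = ψ ∧ v' = w' := by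
  obtain ⟨rfl, hrest⟩ :=
    List.append_inj (by simpa only [List.append_assoc] using hsrc) hlen
  have hφψ : φ = ψ := by
    rcases List.prefix_or_prefix_of_prefix (List.prefix_append φ.1 v')
        (hrest ▸ List.prefix_append ψ.1 w') with h | h
    · exact hred.eq_of_prefix hφ hψ h
    · exact (hred.eq_of_prefix hψ hφ h).symm
  subst hφψ
  exact ⟨rfl, rfl, List.append_cancel_left hrest⟩
end

section
/- Let M be a monoid presented by generators Σ₁ and relations Σ₂, and let [·] be the unique Fox derivation from the free monoid Σ₁* to the free (Z M)-bimodule-like module satisfying [1] = 0 and [uv] = [u]·v̄ + ū·[v] (where ū denotes the image of u in M) extending x ↦ [x] on generators. Then for any two words u, v of Σ₁* representing the same element of M, the element [u] − [v] lies in the submodule generated by the elements {[s(α)] − [t(α)] : α ∈ Σ₂} under the natural (two-sided) action of M. -/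
/-- The image in the monoid `M` of a word over the generators, `π` being induced by
the map `f` on generators. -/
def pim {α M : Type*} [Monoid M] (f : α → M) (u : List α) : M := (u.map f).prod

/-- Left action of `m ∈ M` on the free module `Z M [Σ₁]` over the basis
`M × Σ₁ × M` (two-sided translates of generators). -/
noncomputable def actL {α M : Type*} [Monoid M] (m : M) :
    ((M × α × M) →₀ ℤ) → ((M × α × M) →₀ ℤ) :=
  Finsupp.mapDomain fun q => (m * q.1, q.2.1, q.2.2)

/-- Right action of `m ∈ M` on the free module `Z M [Σ₁]`. -/
noncomputable def actR {α M : Type*} [Monoid M] (m : M) :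
    ((M × α × M) →₀ ℤ) → ((M × α × M) →₀ ℤ) :=
  Finsupp.mapDomain fun q => (q.1, q.2.1, q.2.2 * m)

/-- The Fox derivation `[·] : Σ₁* → Z M [Σ₁]`, the unique derivation with `[1] = 0`,
`[uv] = [u]·v̄ + ū·[v]`, sending each generator `x` to the basis element `(1, x, 1)`. -/
noncomputable def fox {α M : Type*} [Monoid M] (f : α → M) :
    List α → ((M × α × M) →₀ ℤ)
  | [] => 0
  | x :: u => Finsupp.single (1, x, pim f u) 1 + actL (f x) (fox f u)

/-!
Since `[·]` is a derivation, `[l s r] - [l t r] = l̄ · ([s] - [t]) · r̄` whenever `s̄ = t̄`,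
so every rewriting step changes the Fox derivative by a two-sided translate of some
`[s(ρ)] - [t(ρ)]`. Congruence modulo the submodule they span is an equivalence relation
on words, hence contains the congruence generated by the relations, which by the
presentation is equality of images in `M`.
-/

section FoxDerivation

variable {α M : Type*} [Monoid M]

lemma pim_append (f : α → M) (u v : List α) : pim f (u ++ v) = pim f u * pim f v := by
  simp [pim]

lemma pim_cons (f : α → M) (x : α) (u : List α) : pim f (x :: u) = f x * pim f u := by
  simp [pim]

lemma actL_add (m : M) (x y : (M × α × M) →₀ ℤ) : actL m (x + y) = actL m x + actL m y :=
  Finsupp.mapDomain_add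

lemma actR_add (m : M) (x y : (M × α × M) →₀ ℤ) : actR m (x + y) = actR m x + actR m y :=
  Finsupp.mapDomain_add

lemma actL_sub (m : M) (x y : (M × α × M) →₀ ℤ) : actL m (x - y) = actL m x - actL m y :=
  Finsupp.mapDomain_sub

lemma actR_sub (m : M) (x y : (M × α × M) →₀ ℤ) : actR m (x - y) = actR m x - actR m y :=
  Finsupp.mapDomain_sub

lemma actL_one (x : (M × α × M) →₀ ℤ) : actL 1 x = x := by
  simp only [actL, one_mul]
  exact Finsupp.mapDomain_id

lemma actL_mul (a b : M) (x : (M × α × M) →₀ ℤ) : actL (a * b) x = actL a (actL b x) := by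
  simp only [actL, ← Finsupp.mapDomain_comp, Function.comp_def, mul_assoc]

lemma actL_actR (a b : M) (x : (M × α × M) →₀ ℤ) :
    actL a (actR b x) = actR b (actL a x) := by
  simp only [actL, actR, ← Finsupp.mapDomain_comp]
  rfl

lemma actR_single (m a c : M) (x : α) :
    actR m (Finsupp.single (a, x, c) (1 : ℤ)) = Finsupp.single (a, x, c * m) 1 :=
  Finsupp.mapDomain_single

lemma fox_append (f : α → M) (u v : List α) :
    fox f (u ++ v) = actR (pim f v) (fox f u) + actL (pim f u) (fox f v) := by
  induction u with
  | nil => simp [fox, pim, actR, actL_one]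
  | cons x u ih =>
    rw [List.cons_append, fox, fox, ih, actL_add, actR_add, actR_single, pim_append, pim_cons,
      actL_mul, actL_actR]
    abel

lemma fox_sub_fox_of_context (f : α → M) (l r s t : List α) (h : pim f s = pim f t) :
    fox f (l ++ s ++ r) - fox f (l ++ t ++ r) =
      actL (pim f l) (actR (pim f r) (fox f s - fox f t)) := by
  simp only [fox_append, pim_append, h, actR_sub, actL_sub, actR_add, actL_actR]
  abel

end FoxDerivation

lemma Submodule.sub_mem_of_eqvGen {X R G : Type*} [Ring R] [AddCommGroup G] [Module R G]
    (S : Submodule R G) (g : X → G) {r : X → X → Prop}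
    (hr : ∀ a b, r a b → g a - g b ∈ S)
    {a b : X} (h : Relation.EqvGen r a b) : g a - g b ∈ S :=
  S.quotientRel_def.mp <| (Setoid.comap g S.quotientRel).iseqv.eqvGen_iff.mp <|
    h.mono fun a b hab => S.quotientRel_def.mpr (hr a b hab)

/-- Let `M` be the monoid presented by generators `Σ₁ = α` and relations `Σ₂ = R`
(via a map `f` on generators whose induced projection `π` identifies two words exactly
when they are congruent). For any two words `u`, `v` representing the same element of
`M`, the element `[u] − [v]` lies in the submodule generated by the two-sided
`M`-translates of the elements `[s(ρ)] − [t(ρ)]`, for `ρ` ranging over the relations. -/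
theorem fox_kernel_generated_by_relations {α M : Type*} [Monoid M]
    (R : Set (List α × List α)) (f : α → M)
    (hpres : ∀ u v : List α, pim f u = pim f v ↔ Relation.EqvGen (Step R) u v)
    (u v : List α) (h : pim f u = pim f v) :
    fox f u - fox f v ∈ Submodule.span ℤ
      {x : (M × α × M) →₀ ℤ | ∃ (a b : M) (p : List α × List α), p ∈ R ∧
        x = actL a (actR b (fox f p.1 - fox f p.2))} := by
  have hrel : ∀ p ∈ R, pim f p.1 = pim f p.2 := fun p hp =>
    (hpres _ _).mpr (.rel _ _ ⟨[], [], p, hp, by simp, by simp⟩)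
  refine Submodule.sub_mem_of_eqvGen _ (fox f) ?_ ((hpres u v).mp h)
  rintro _ _ ⟨l, r, p, hp, rfl, rfl⟩
  rw [fox_sub_fox_of_context f l r p.1 p.2 (hrel p hp)]
  exact Submodule.subset_span ⟨_, _, p, hp, rfl⟩
end

section
/- For the rewriting system on Epi with rules s_i s_j ⇒ s_{j+1} s_i for i ≤ j, every critical branching arises from a word s_i s_j s_k with i ≤ j ≤ k, and each such branching is confluent: both s_{j+1} s_i s_k and s_i s_{k+1} s_j rewrite to the common normal form s_{k+2} s_{j+1} s_i. Hence the system is convergent. -/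
/-!
Every letter pushed in from the left moves rightwards past the letters `≥` it, each of
which goes up by one; folding this insertion over a word gives a normal form `Epi.nf`
reachable from the word. The rule `s_i s_j ⇒ s_{j+1} s_i` is exactly the commutation
`ins i ∘ ins j = ins (j + 1) ∘ ins i` of insertions, so `nf` is constant along rewriting,
and any two reducts of a word meet at its normal form.

Termination: a step raises the letter sum by one while preserving the length and
`shiftedMax u = max_p (u_p + p + 1)`, which bounds every letter.
-/

/-- A rewriting step of the presentation of `Epi`: replace a factor `s_i s_j` with
`i ≤ j` by `s_{j+1} s_i`. -/
def EStep (u v : List ℕ) : Prop :=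
  ∃ (l r : List ℕ) (i j : ℕ), i ≤ j ∧
    u = l ++ [i, j] ++ r ∧ v = l ++ [j + 1, i] ++ r

theorem EStep.cons {u v : List ℕ} (a : ℕ) (h : EStep u v) : EStep (a :: u) (a :: v) := by
  obtain ⟨l, r, i, j, hij, rfl, rfl⟩ := h
  exact ⟨a :: l, r, i, j, hij, rfl, rfl⟩

namespace Epi

open Relation

theorem overlap_eq {i j i' j' : ℕ} {l r : List ℕ}
    (heq : ([i, j] : List ℕ) ++ r = l ++ [i', j'])
    (hne : ¬ ((i, j) = (i', j') ∧ l = [] ∧ r = [])) (hlen : l.length < 2) :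
    l = [i] ∧ r = [j'] ∧ i' = j := by
  rcases l with _ | ⟨x, _ | ⟨y, l⟩⟩
  · simp only [List.cons_append, List.nil_append, List.cons.injEq] at heq
    obtain ⟨rfl, rfl, rfl⟩ := heq
    exact absurd ⟨rfl, rfl, rfl⟩ hne
  · simp only [List.cons_append, List.nil_append, List.cons.injEq] at heq
    obtain ⟨rfl, rfl, rfl⟩ := heq
    exact ⟨rfl, rfl, rfl⟩
  · simp at hlen

theorem critical_joinable {i j k : ℕ} (hij : i ≤ j) (hjk : j ≤ k) :
    ReflTransGen EStep [j + 1, i, k] [k + 2, j + 1, i] ∧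
      ReflTransGen EStep [i, k + 1, j] [k + 2, j + 1, i] := by
  constructor
  · have s₁ : EStep [j + 1, i, k] [j + 1, k + 1, i] :=
      ⟨[j + 1], [], i, k, hij.trans hjk, rfl, rfl⟩
    have s₂ : EStep [j + 1, k + 1, i] [k + 2, j + 1, i] :=
      ⟨[], [i], j + 1, k + 1, by omega, rfl, rfl⟩
    exact .tail (.single s₁) s₂
  · have s₁ : EStep [i, k + 1, j] [k + 2, i, j] :=
      ⟨[], [j], i, k + 1, by omega, rfl, rfl⟩
    have s₂ : EStep [k + 2, i, j] [k + 2, j + 1, i] :=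
      ⟨[k + 2], [], i, j, hij, rfl, rfl⟩
    exact .tail (.single s₁) s₂

theorem reflTransGen_cons {u v : List ℕ} (a : ℕ) (h : ReflTransGen EStep u v) :
    ReflTransGen EStep (a :: u) (a :: v) :=
  h.lift (a :: ·) fun _ _ => EStep.cons a

def ins (a : ℕ) : List ℕ → List ℕ
  | [] => [a]
  | b :: w => if a ≤ b then (b + 1) :: ins a w else a :: b :: w

def nf : List ℕ → List ℕ := List.foldr ins []

theorem ins_ins_of_le {i j : ℕ} (h : i ≤ j) (w : List ℕ) :
    ins i (ins j w) = ins (j + 1) (ins i w) := by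
  induction w with
  | nil => simp [ins, h, show ¬ j + 1 ≤ i by omega]
  | cons b w ih =>
    by_cases hjb : j ≤ b
    · simp [ins, hjb, h.trans hjb, show i ≤ b + 1 by omega, ih]
    · by_cases hib : i ≤ b
      · simp [ins, hjb, hib, h]
      · simp [ins, hjb, hib, h, show ¬ j + 1 ≤ i by omega]

theorem nf_eq_of_eStep {u v : List ℕ} (h : EStep u v) : nf u = nf v := by
  obtain ⟨l, r, i, j, hij, rfl, rfl⟩ := h
  simp only [nf, List.append_assoc, List.foldr_append, List.foldr_cons]
  rw [ins_ins_of_le hij]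

theorem nf_eq_of_reflTransGen {u v : List ℕ} (h : ReflTransGen EStep u v) : nf u = nf v := by
  induction h with
  | refl => rfl
  | tail _ h ih => exact ih.trans (nf_eq_of_eStep h)

theorem reflTransGen_cons_ins (a : ℕ) (w : List ℕ) : ReflTransGen EStep (a :: w) (ins a w) := by
  induction w with
  | nil => exact .refl
  | cons b w ih =>
    by_cases hab : a ≤ b
    · have step : EStep (a :: b :: w) ((b + 1) :: a :: w) := ⟨[], w, a, b, hab, rfl, rfl⟩
      simpa only [ins, if_pos hab] using .head step (reflTransGen_cons (b + 1) ih)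
    · simp only [ins, if_neg hab]
      exact .refl

theorem reflTransGen_nf (w : List ℕ) : ReflTransGen EStep w (nf w) := by
  induction w with
  | nil => exact .refl
  | cons a w ih => exact (reflTransGen_cons a ih).trans (reflTransGen_cons_ins a (nf w))

theorem confluent {w a b : List ℕ} (ha : ReflTransGen EStep w a) (hb : ReflTransGen EStep w b) :
    ∃ c, ReflTransGen EStep a c ∧ ReflTransGen EStep b c := by
  refine ⟨nf a, reflTransGen_nf a, ?_⟩
  rw [← nf_eq_of_reflTransGen ha, nf_eq_of_reflTransGen hb]
  exact reflTransGen_nf b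

def shiftedMax : List ℕ → ℕ
  | [] => 0
  | a :: w => max (a + 1) (shiftedMax w + 1)

theorem sum_le_length_mul_shiftedMax (w : List ℕ) : w.sum ≤ w.length * shiftedMax w := by
  induction w with
  | nil => simp
  | cons a w ih =>
    have ha : a ≤ shiftedMax (a :: w) := by simp only [shiftedMax]; omega
    have hw : shiftedMax w ≤ shiftedMax (a :: w) := by simp only [shiftedMax]; omega
    simp only [List.sum_cons, List.length_cons]
    nlinarith

theorem shiftedMax_eq_of_eStep {u v : List ℕ} (h : EStep u v) : shiftedMax v = shiftedMax u := by
  obtain ⟨l, r, i, j, hij, rfl, rfl⟩ := h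
  induction l with
  | nil => simp only [shiftedMax, List.nil_append, List.cons_append]; omega
  | cons a l ih => simp only [shiftedMax, List.cons_append] at ih ⊢; rw [ih]

theorem sum_eq_of_eStep {u v : List ℕ} (h : EStep u v) : v.sum = u.sum + 1 := by
  obtain ⟨l, r, i, j, -, rfl, rfl⟩ := h
  simp only [List.sum_append, List.sum_cons, List.sum_nil]
  omega

theorem length_eq_of_eStep {u v : List ℕ} (h : EStep u v) : v.length = u.length := by
  obtain ⟨l, r, i, j, -, rfl, rfl⟩ := h
  simp

theorem wellFounded : WellFounded (fun v u => EStep u v) :=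
  (measure fun u => u.length * shiftedMax u - u.sum).wf.mono fun v u h => by
    have hv := sum_le_length_mul_shiftedMax v
    show v.length * shiftedMax v - v.sum < u.length * shiftedMax u - u.sum
    rw [length_eq_of_eStep h, shiftedMax_eq_of_eStep h, sum_eq_of_eStep h] at hv ⊢
    omega

end Epi

/-- For the rewriting system on `Epi` with rules `s_i s_j ⇒ s_{j+1} s_i` (`i ≤ j`),
every critical branching — a minimal overlapping pair of steps, given by rules with
sources `[i, j]` (`i ≤ j`, empty left context) and `[i', j']` (`i' ≤ j'`, empty right
context) overlapping on a common word — arises from a word `s_i s_j s_k` with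
`i ≤ j ≤ k`; each such branching is confluent: both reducts `s_{j+1} s_i s_k` and
`s_i s_{k+1} s_j` rewrite to the common normal form `s_{k+2} s_{j+1} s_i`. Hence the
system, being terminating, is convergent (confluent). -/
theorem Epi_presentation_convergent :
    -- critical branchings come from words [i, j, k] with i ≤ j ≤ k
    (∀ (i j i' j' : ℕ) (l r : List ℕ), i ≤ j → i' ≤ j' →
      ([i, j] : List ℕ) ++ r = l ++ [i', j'] →
      ¬ ((i, j) = (i', j') ∧ l = [] ∧ r = []) →
      l.length < 2 →
      l = [i] ∧ r = [j'] ∧ i' = j ∧ i ≤ j ∧ j ≤ j') ∧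
    -- each critical branching is confluent with common normal form s_{k+2} s_{j+1} s_i
    (∀ i j k : ℕ, i ≤ j → j ≤ k →
      Relation.ReflTransGen EStep [j + 1, i, k] [k + 2, j + 1, i] ∧
      Relation.ReflTransGen EStep [i, k + 1, j] [k + 2, j + 1, i]) ∧
    -- termination
    WellFounded (fun v u => EStep u v) ∧
    -- confluence
    (∀ w a b : List ℕ, Relation.ReflTransGen EStep w a →
      Relation.ReflTransGen EStep w b →
      ∃ c, Relation.ReflTransGen EStep a c ∧ Relation.ReflTransGen EStep b c) := by
  refine ⟨fun i j i' j' l r hij hij' heq hne hlen => ?_,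
    fun _ _ _ => Epi.critical_joinable, Epi.wellFounded, fun _ _ _ => Epi.confluent⟩
  obtain ⟨rfl, rfl, rfl⟩ := Epi.overlap_eq heq hne hlen
  exact ⟨rfl, rfl, rfl, hij, hij'⟩
end
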